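/- Let P and Q be probability measures on a measurable space Ω. Then KL(P‖Q) = sup over all bounded measurable functions T : Ω → ℝ of (∫ T dP − ∫ e^{T−1} dQ), where the supremum is taken in the extended reals. (Variational f-divergence representation of the KL divergence via the conjugate t ↦ e^{t−1}.) -/

import Mathlib

/-!
Write `r = dP/dQ` and `klFun r = r log r + 1 - r`, so that `KL(P‖Q) = ∫ klFun r dQ` when `P ≪ Q`.
For bounded `T` the objective equals `∫ (r T + 1 - r - e^{T-1}) dQ`, and the Fenchel–Young
inequality `r t - e^{t-1} ≤ r log r` bounds this integrand by `klFun r`.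
Conversely, for `T_n = log (clip_n r) + 1`, with `r` clipped to `[e^{-n}, e^n]`, the integrand is
nonnegative and tends to `klFun r` pointwise, so Fatou's lemma gives the reverse inequality,
whether the divergence is finite or not.
If `P` is not `≪ Q`, a `Q`-null set `s` with `P s > 0` gives the test functions `n • 1_s`, whose
objectives `n P(s) - e^{-1}` are unbounded.
-/

open MeasureTheory Real
open scoped Classical

/-- The Kullback–Leibler divergence between two measures, valued in the extended reals,
matching Mathlib's `klDiv`: it is `∫ log (dP/dQ) dP` if `P ≪ Q` and the log-likelihood
ratio is `P`-integrable, and `⊤` otherwise. -/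

noncomputable def klDiv {Ω : Type*} [MeasurableSpace Ω] (P Q : Measure Ω) : EReal :=
  if P ≪ Q ∧ Integrable (llr P Q) P then ((∫ x, llr P Q x ∂P : ℝ) : EReal) else ⊤

open Filter Topology
open InformationTheory (klFun klFun_nonneg)

lemma mul_sub_exp_sub_one_le_mul_log {a : ℝ} (ha : 0 ≤ a) (t : ℝ) :
    a * t - exp (t - 1) ≤ a * log a := by
  rcases ha.eq_or_lt with rfl | ha
  · simp [(exp_pos _).le]
  · have h := add_one_le_exp (t - 1 - log a)
    rw [exp_sub _ (log a), exp_log ha, le_div_iff₀ ha] at h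
    linarith

lemma mul_add_one_sub_sub_exp_le_klFun {a : ℝ} (ha : 0 ≤ a) (t : ℝ) :
    a * t + 1 - a - exp (t - 1) ≤ klFun a := by
  rw [klFun]
  linarith [mul_sub_exp_sub_one_le_mul_log ha t]

lemma mul_log_add_one_sub_nonneg {a c : ℝ} (ha : 0 ≤ a)
    (hc : (1 ≤ c ∧ c ≤ a) ∨ (a ≤ c ∧ c ≤ 1)) : 0 ≤ a * log c + 1 - c := by
  have hc0 : 0 ≤ c := by rcases hc with h | h <;> linarith
  have hmul : 0 ≤ (a - c) * log c := by
    rcases hc with ⟨h1, h2⟩ | ⟨h1, h2⟩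
    · exact mul_nonneg (by linarith) (log_nonneg h1)
    · exact mul_nonneg_of_nonpos_of_nonpos (by linarith) (log_nonpos hc0 h2)
  have hsplit : a * log c + 1 - c = klFun c + (a - c) * log c := by
    rw [klFun]
    ring
  rw [hsplit]
  exact add_nonneg (klFun_nonneg hc0) hmul

noncomputable def clipExp (n : ℕ) (a : ℝ) : ℝ := max (exp (-n)) (min (exp n) a)

lemma continuous_clipExp (n : ℕ) : Continuous (clipExp n) := by
  unfold clipExp
  fun_prop

lemma clipExp_pos (n : ℕ) (a : ℝ) : 0 < clipExp n a :=
  (exp_pos _).trans_le (le_max_left _ _)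

lemma abs_log_clipExp_le (n : ℕ) (a : ℝ) : |log (clipExp n a)| ≤ n := by
  have h1 : exp (-n) ≤ clipExp n a := le_max_left _ _
  have h2 : clipExp n a ≤ exp n := max_le (exp_le_exp.2 (by simp)) (min_le_left _ _)
  rw [abs_le]
  constructor
  · simpa using log_le_log (exp_pos _) h1
  · simpa using log_le_log (clipExp_pos n a) h2

lemma clipExp_between (n : ℕ) {a : ℝ} :
    (1 ≤ clipExp n a ∧ clipExp n a ≤ a) ∨ (a ≤ clipExp n a ∧ clipExp n a ≤ 1) := by
  have h1 : exp (-n) ≤ 1 := exp_le_one_iff.2 (by simp)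
  have h2 : 1 ≤ exp n := one_le_exp (by simp)
  unfold clipExp
  rcases le_total 1 a with ha | ha
  · exact Or.inl ⟨le_max_of_le_right (le_min h2 ha), max_le (h1.trans ha) (min_le_right _ _)⟩
  · exact Or.inr ⟨le_max_of_le_right (le_min (ha.trans h2) le_rfl),
      max_le h1 ((min_le_right _ _).trans ha)⟩

lemma tendsto_clipExp (a : ℝ) : Tendsto (fun n : ℕ => clipExp n a) atTop (𝓝 (max 0 a)) := by
  have hlow : Tendsto (fun n : ℕ => exp (-n)) atTop (𝓝 0) :=
    tendsto_exp_neg_atTop_nhds_zero.comp tendsto_natCast_atTop_atTop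
  have hup : ∀ᶠ n : ℕ in atTop, min (exp n) a = a :=
    ((tendsto_exp_atTop.comp tendsto_natCast_atTop_atTop).eventually_ge_atTop a).mono
      fun n hn => min_eq_right hn
  exact hlow.max (tendsto_const_nhds.congr' (hup.mono fun n hn => hn.symm))

lemma tendsto_mul_log_clipExp {a : ℝ} (ha : 0 ≤ a) :
    Tendsto (fun n : ℕ => a * log (clipExp n a) + 1 - clipExp n a) atTop (𝓝 (klFun a)) := by
  have hclip := tendsto_clipExp a
  rw [max_eq_right ha] at hclip
  rcases ha.eq_or_lt with rfl | ha
  · simpa [klFun] using (tendsto_const_nhds (x := (1 : ℝ))).sub hclip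
  · exact ((tendsto_const_nhds.mul ((continuousAt_log ha.ne').tendsto.comp hclip)).add_const
      1).sub hclip

lemma ofReal_integral_le_lintegral_ofReal {α : Type*} [MeasurableSpace α] {μ : Measure α}
    {f : α → ℝ} (hf : Integrable f μ) :
    ENNReal.ofReal (∫ x, f x ∂μ) ≤ ∫⁻ x, ENNReal.ofReal (f x) ∂μ := by
  rw [integral_eq_lintegral_pos_part_sub_lintegral_neg_part hf]
  exact (ENNReal.ofReal_le_ofReal (sub_le_self _ ENNReal.toReal_nonneg)).trans
    ENNReal.ofReal_toReal_le

lemma EReal.coe_ennreal_le_of_le_liminf {x : ℕ → ENNReal} {L : ENNReal} {S : EReal}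
    (hL : L ≤ liminf x atTop) (hS : ∀ n, (x n : EReal) ≤ S) : (L : EReal) ≤ S := by
  have hS0 : 0 ≤ S := (EReal.coe_ennreal_nonneg _).trans (hS 0)
  rw [← EReal.coe_toENNReal hS0, EReal.coe_ennreal_le_coe_ennreal_iff]
  refine hL.trans (liminf_le_of_le (by isBoundedDefault) fun b hb => ?_)
  obtain ⟨n, hn⟩ := hb.exists
  rw [← EReal.coe_ennreal_le_coe_ennreal_iff, EReal.coe_toENNReal hS0]
  exact (EReal.coe_ennreal_le_coe_ennreal_iff.2 hn).trans (hS n)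

section Variational

variable {Ω : Type*} [MeasurableSpace Ω] {P Q : Measure Ω}

noncomputable def nwjObjective (P Q : Measure Ω) (T : Ω → ℝ) : ℝ :=
  ∫ x, T x ∂P - ∫ x, exp (T x - 1) ∂Q

noncomputable def nwjSup (P Q : Measure Ω) : EReal :=
  ⨆ T : {T : Ω → ℝ // Measurable T ∧ ∃ C : ℝ, ∀ x, |T x| ≤ C}, (nwjObjective P Q T.1 : EReal)

lemma le_nwjSup {T : Ω → ℝ} (hT : Measurable T) {C : ℝ} (hC : ∀ x, |T x| ≤ C) :
    (nwjObjective P Q T : EReal) ≤ nwjSup P Q :=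
  le_iSup_of_le (ι := {T : Ω → ℝ // Measurable T ∧ ∃ C : ℝ, ∀ x, |T x| ≤ C}) ⟨T, hT, C, hC⟩
    le_rfl

variable [IsProbabilityMeasure P] [IsProbabilityMeasure Q]

lemma klDiv_eq_coe_klDiv : klDiv P Q = (InformationTheory.klDiv P Q : EReal) := by
  by_cases h : P ≪ Q ∧ Integrable (llr P Q) P
  · have hnonneg := InformationTheory.integral_llr_add_sub_measure_univ_nonneg h.1 h.2
    simp only [probReal_univ, add_sub_cancel_right] at hnonneg
    rw [klDiv, if_pos h, InformationTheory.klDiv_of_ac_of_integrable h.1 h.2,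
      EReal.coe_ennreal_ofReal]
    simp [hnonneg]
  · rw [klDiv, if_neg h, InformationTheory.klDiv_eq_top_iff.2 fun hac hint => h ⟨hac, hint⟩]
    rfl

lemma integrable_and_nwjObjective_eq_integral (hac : P ≪ Q) {T : Ω → ℝ} (hT : Measurable T)
    {C : ℝ} (hC : ∀ x, |T x| ≤ C) :
    Integrable (fun x => (P.rnDeriv Q x).toReal * T x + 1 - (P.rnDeriv Q x).toReal
        - exp (T x - 1)) Q ∧
      nwjObjective P Q T = ∫ x, ((P.rnDeriv Q x).toReal * T x + 1 - (P.rnDeriv Q x).toReal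
        - exp (T x - 1)) ∂Q := by
  have hTP : Integrable T P :=
    Integrable.of_bound hT.aestronglyMeasurable C (ae_of_all _ fun x => hC x)
  have hrT := (integrable_toReal_rnDeriv_mul_iff hac).2 hTP
  have hr : Integrable (fun x => (P.rnDeriv Q x).toReal) Q := Measure.integrable_toReal_rnDeriv
  have hrT1 : Integrable (fun x => (P.rnDeriv Q x).toReal * T x + 1) Q :=
    hrT.add (integrable_const 1)
  have hrT1r :
      Integrable (fun x => (P.rnDeriv Q x).toReal * T x + 1 - (P.rnDeriv Q x).toReal) Q :=
    hrT1.sub hr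
  have hexp : Integrable (fun x => exp (T x - 1)) Q :=
    Integrable.of_bound (hT.sub_const 1).exp.aestronglyMeasurable (exp (C - 1))
      (ae_of_all _ fun x => by
        rw [norm_of_nonneg (exp_pos _).le, exp_le_exp]
        linarith [(abs_le.1 (hC x)).2])
  refine ⟨hrT1r.sub hexp, ?_⟩
  rw [integral_sub hrT1r hexp, integral_sub hrT1 hr, integral_add hrT (integrable_const 1),
    integral_toReal_rnDeriv_mul hac, Measure.integral_toReal_rnDeriv hac]
  simp [nwjObjective]

lemma nwjSup_le_klDiv : nwjSup P Q ≤ InformationTheory.klDiv P Q := by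
  refine iSup_le fun ⟨T, hT, C, hC⟩ => ?_
  by_cases hac : P ≪ Q
  swap
  · simp [InformationTheory.klDiv_of_not_ac hac]
  obtain ⟨hint, heq⟩ := integrable_and_nwjObjective_eq_integral hac hT hC
  rw [heq, InformationTheory.klDiv_eq_lintegral_klFun_of_ac hac]
  refine (EReal.coe_le_coe_iff.2 (le_max_left _ 0)).trans ?_
  rw [← EReal.coe_ennreal_ofReal, EReal.coe_ennreal_le_coe_ennreal_iff]
  refine (ofReal_integral_le_lintegral_ofReal hint).trans (lintegral_mono fun x => ?_)
  exact ENNReal.ofReal_le_ofReal (mul_add_one_sub_sub_exp_le_klFun ENNReal.toReal_nonneg _)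

lemma klDiv_le_nwjSup_of_ac (hac : P ≪ Q) :
    (InformationTheory.klDiv P Q : EReal) ≤ nwjSup P Q := by
  set r : Ω → ℝ := fun x => (P.rnDeriv Q x).toReal
  have hr : Measurable r := (Measure.measurable_rnDeriv P Q).ennreal_toReal
  set T : ℕ → Ω → ℝ := fun n x => log (clipExp n (r x)) + 1
  have hT : ∀ n, Measurable (T n) := fun n =>
    ((continuous_clipExp n).measurable.comp hr).log.add_const 1
  have hT_bdd : ∀ n x, |T n x| ≤ n + 1 := fun n x =>
    (abs_add_le _ _).trans (by simpa using abs_log_clipExp_le n (r x))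
  have hψ : ∀ n x, r x * T n x + 1 - r x - exp (T n x - 1)
      = r x * log (clipExp n (r x)) + 1 - clipExp n (r x) := fun n x => by
    simp only [T, add_sub_cancel_right, exp_log (clipExp_pos n _)]
    ring
  have hψ_nonneg : ∀ n x, 0 ≤ r x * log (clipExp n (r x)) + 1 - clipExp n (r x) :=
    fun n x => mul_log_add_one_sub_nonneg ENNReal.toReal_nonneg (clipExp_between n)
  rw [InformationTheory.klDiv_eq_lintegral_klFun_of_ac hac]
  refine EReal.coe_ennreal_le_of_le_liminf
    (x := fun n => ∫⁻ x, ENNReal.ofReal (r x * log (clipExp n (r x)) + 1 - clipExp n (r x)) ∂Q)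
    ?_ fun n => ?_
  · calc ∫⁻ x, ENNReal.ofReal (klFun (r x)) ∂Q
        = ∫⁻ x, liminf (fun n : ℕ =>
            ENNReal.ofReal (r x * log (clipExp n (r x)) + 1 - clipExp n (r x))) atTop ∂Q :=
          lintegral_congr fun x => ((ENNReal.tendsto_ofReal
            (tendsto_mul_log_clipExp ENNReal.toReal_nonneg)).liminf_eq).symm
      _ ≤ _ := lintegral_liminf_le fun n => by
          have := (continuous_clipExp n).measurable.comp hr
          fun_prop
  · obtain ⟨hint, heq⟩ := integrable_and_nwjObjective_eq_integral hac (hT n) (hT_bdd n)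
    replace hint := hint.congr (ae_of_all _ (hψ n))
    replace heq := heq.trans (integral_congr_ae (ae_of_all _ (hψ n)))
    rw [← ofReal_integral_eq_lintegral_ofReal hint (ae_of_all _ (hψ_nonneg n)),
      EReal.coe_ennreal_ofReal, max_eq_left (integral_nonneg (hψ_nonneg n)), ← heq]
    exact le_nwjSup (hT n) (hT_bdd n)

lemma nwjSup_eq_top_of_not_ac (hac : ¬ P ≪ Q) : nwjSup P Q = ⊤ := by
  obtain ⟨s, hs, hQs, hPs⟩ : ∃ s, MeasurableSet s ∧ Q s = 0 ∧ P s ≠ 0 := by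
    by_contra! h
    exact hac (Measure.AbsolutelyContinuous.mk h)
  have hPs' : 0 < P.real s := ENNReal.toReal_pos hPs (measure_ne_top P s)
  have hobj : ∀ c : ℝ, nwjObjective P Q (s.indicator fun _ => c) = P.real s * c - exp (-1) := by
    intro c
    have hexp : (fun x => exp (s.indicator (fun _ => c) x - 1)) =ᵐ[Q] fun _ => exp (-1) := by
      filter_upwards [measure_eq_zero_iff_ae_notMem.1 hQs] with x hx
      simp [Set.indicator_of_notMem hx]
    rw [nwjObjective, integral_congr_ae hexp, integral_indicator_const _ hs]
    simp
  refine (EReal.eq_top_iff_forall_lt _).2 fun M => ?_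
  obtain ⟨n, hn⟩ := exists_nat_gt ((M + exp (-1)) / P.real s)
  have hbdd : ∀ x, |s.indicator (fun _ => (n : ℝ)) x| ≤ n := fun x => by
    by_cases hx : x ∈ s <;> simp [hx]
  refine lt_of_lt_of_le ?_ (le_nwjSup (measurable_const.indicator hs) hbdd)
  rw [hobj, EReal.coe_lt_coe_iff]
  rw [div_lt_iff₀ hPs'] at hn
  linarith

end Variational

/-- Variational f-divergence representation of the KL divergence via the conjugate
`t ↦ e^{t−1}`: `KL(P‖Q)` equals the supremum over all bounded measurable `T : Ω → ℝ` of
`∫ T dP − ∫ e^{T−1} dQ`, in the extended reals. -/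
theorem nwj_representation {Ω : Type*} [MeasurableSpace Ω]
    (P Q : Measure Ω) [IsProbabilityMeasure P] [IsProbabilityMeasure Q] :
    klDiv P Q = ⨆ T : {T : Ω → ℝ // Measurable T ∧ ∃ C : ℝ, ∀ x, |T x| ≤ C},
      ((∫ x, T.1 x ∂P - ∫ x, Real.exp (T.1 x - 1) ∂Q : ℝ) : EReal) := by
  change klDiv P Q = nwjSup P Q
  rw [klDiv_eq_coe_klDiv]
  refine le_antisymm ?_ nwjSup_le_klDiv
  by_cases hac : P ≪ Q
  · exact klDiv_le_nwjSup_of_ac hac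
  · rw [nwjSup_eq_top_of_not_ac hac]
    exact le_top
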